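/- Let D̃ be the free three-dimensional Dirac operator with constant magnetic field of strength b ≥ 1 in the linear gauge, and let 1 ≤ P ≤ c b. Then the matrix norm of the resolvent kernel satisfies ‖(D̃² + P)^{-1}(ξ, ζ)‖ ≤ C b P^{-1/2} e^{−c|||ξ−ζ|||}/|||ξ−ζ|||, where |||ξ||| = (b ξ⊥² + P ξ₃²)^{1/2}. -/

import Mathlib

/-!
The integrand of the heat-kernel formula is bounded pointwise. For `y = bt > 0`,
`e^{±y} / sinh y ≤ 2 + 1/y` and `2 coth y ≥ 1 + 1/y`; with AM–GM, `√(P z²) ≤ P t + z²/(4t)`,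
this dominates the integrand by `e^{1/8 - |||ξ-ζ|||/8}` times
`2b t^{-1/2} e^{-Pt/2} + t^{-3/2} e^{-|ξ-ζ|²/(16t)}`, whose integral is the explicit Gamma-type
value `2b √(2π/P) + 4√π / |ξ-ζ|`. Splitting `e^{-|||ξ-ζ|||/8}` into two factors `e^{-|||ξ-ζ|||/16}`,
one of them absorbs a factor `|||ξ-ζ|||` (as `e^{-x/16} ≤ 16/x`) in the first term, while in the
second `√P |||ξ-ζ||| ≤ √(κ(1+κ)) b |ξ-ζ|` follows from `P ≤ κ b`.
-/

open Real

/-- The Mehler heat kernel of the two-dimensional magnetic Laplacian with constant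
field `b` in symmetric gauge. -/
noncomputable def mehlerKernel (b t : ℝ) (ξ ζ : ℝ × ℝ) : ℂ :=
  ((b / (4 * π * Real.sinh (b * t)) : ℝ) : ℂ) *
    Complex.exp
      (-(((b * Real.cosh (b * t) / Real.sinh (b * t) / 4 : ℝ) : ℂ)) *
          (((ξ.1 - ζ.1) ^ 2 + (ξ.2 - ζ.2) ^ 2 : ℝ) : ℂ)
        - Complex.I * ((b / 2 : ℝ) : ℂ) * ((ξ.2 * ζ.1 - ξ.1 * ζ.2 : ℝ) : ℂ))

/-- Diagonal entry (spin `σ³` eigenvalue `sgn = ±1`) of the resolvent kernel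
`(D̃² + P)⁻¹(ξ, ζ)` of the constant-field Dirac operator, via the heat kernel formula
`(D̃² + P)⁻¹ = ∫₀^∞ e^{−t(P + σ³ b)} e^{tΔ̃} e^{t ∂₃²} dt`, with the one-dimensional heat
kernel `e^{t∂₃²}(x, y) = (4πt)^{−1/2} e^{−(x−y)²/4t}`. -/
noncomputable def diracResolventEntry (b P sgn : ℝ) (ξ ζ : Fin 3 → ℝ) : ℂ :=
  ∫ t in Set.Ioi (0 : ℝ),
    ((Real.exp (-(t * (P + sgn * b))) : ℝ) : ℂ) *
      mehlerKernel b t (ξ 0, ξ 1) (ζ 0, ζ 1) *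
      ((1 / Real.sqrt (4 * π * t) : ℝ) : ℂ) *
      Complex.exp (-(((ξ 2 - ζ 2) ^ 2 / (4 * t) : ℝ) : ℂ))

open MeasureTheory Set

namespace Real

theorem sinh_le_mul_cosh {y : ℝ} (hy : 0 ≤ y) : sinh y ≤ y * cosh y := by
  have hderiv (x : ℝ) : HasDerivAt (fun u ↦ u * cosh u - sinh u) (x * sinh x) x := by
    refine (((hasDerivAt_id' x).mul (hasDerivAt_cosh x)).sub (hasDerivAt_sinh x)).congr_deriv ?_
    ring
  have hmono : MonotoneOn (fun u ↦ u * cosh u - sinh u) (Ici 0) := by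
    refine monotoneOn_of_deriv_nonneg (convex_Ici 0) (by fun_prop)
      (fun x _ ↦ (hderiv x).differentiableAt.differentiableWithinAt) fun x hx ↦ ?_
    rw [interior_Ici] at hx
    rw [(hderiv x).deriv]
    exact mul_nonneg hx.le (sinh_pos_iff.mpr hx).le
  simpa using hmono self_mem_Ici hy hy

theorem one_add_inv_le_two_mul_cosh_div_sinh {y : ℝ} (hy : 0 < y) :
    1 + y⁻¹ ≤ 2 * (cosh y / sinh y) := by
  have hs : 0 < sinh y := sinh_pos_iff.mpr hy
  have h1 : 1 ≤ cosh y / sinh y := (one_le_div hs).mpr (sinh_lt_cosh y).le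
  have h2 : y⁻¹ ≤ cosh y / sinh y := by
    rw [inv_le_iff_one_le_mul₀ hy, div_mul_eq_mul_div, one_le_div hs, mul_comm]
    exact sinh_le_mul_cosh hy.le
  linarith

theorem exp_neg_div_sinh_le_inv {y : ℝ} (hy : 0 < y) : exp (-y) / sinh y ≤ y⁻¹ := by
  have hs : 0 < sinh y := sinh_pos_iff.mpr hy
  rw [div_le_iff₀ hs, sinh_eq, exp_neg]
  have h2y : 1 + 2 * y ≤ exp y ^ 2 := by
    rw [← exp_nat_mul]; push_cast; linarith [add_one_le_exp (2 * y)]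
  have he : 0 < exp y := exp_pos y
  field_simp
  nlinarith

theorem exp_div_sinh_le {y : ℝ} (hy : 0 < y) : exp y / sinh y ≤ 2 + y⁻¹ := by
  have hs : 0 < sinh y := sinh_pos_iff.mpr hy
  have hsplit : exp y / sinh y = 2 + exp (-y) / sinh y := by
    field_simp; rw [sinh_eq]; ring
  linarith [exp_neg_div_sinh_le_inv hy]

theorem exp_neg_mul_div_sinh_le {σ y : ℝ} (hσ : σ = 1 ∨ σ = -1) (hy : 0 < y) :
    exp (-(σ * y)) / sinh y ≤ 2 + y⁻¹ := by
  rcases hσ with rfl | rfl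
  · simpa using (exp_neg_div_sinh_le_inv hy).trans (le_add_of_nonneg_left zero_le_two)
  · simpa using exp_div_sinh_le hy

theorem sqrt_mul_le_mul_add_div {a c t : ℝ} (ha : 0 ≤ a) (hc : 0 ≤ c) (ht : 0 < t) :
    √(a * c) ≤ a * t + c / (4 * t) := by
  have hprod : a * t * (c / (4 * t)) = a * c / 4 := by field_simp
  refine sqrt_le_iff.mpr ⟨by positivity, ?_⟩
  nlinarith [sq_nonneg (a * t - c / (4 * t))]

theorem exp_neg_le_inv {x : ℝ} (hx : 0 < x) : exp (-x) ≤ x⁻¹ := by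
  rw [exp_neg]
  exact inv_anti₀ hx ((le_add_of_nonneg_right zero_le_one).trans (add_one_le_exp x))

end Real

theorem integrableOn_rpow_neg_half_mul_exp_neg_mul {β : ℝ} (hβ : 0 < β) :
    IntegrableOn (fun t : ℝ ↦ t ^ (-(1 / 2) : ℝ) * exp (-(β * t))) (Ioi 0) := by
  refine (integrableOn_rpow_mul_exp_neg_mul_rpow (s := -(1 / 2)) (p := 1) (by norm_num) one_pos
    hβ).congr_fun (fun t _ ↦ ?_) measurableSet_Ioi
  simp only [rpow_one, neg_mul]

theorem integral_rpow_neg_half_mul_exp_neg_mul {β : ℝ} (hβ : 0 < β) :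
    ∫ t in Ioi (0 : ℝ), t ^ (-(1 / 2) : ℝ) * exp (-(β * t)) = √π / √β := by
  have h := integral_rpow_mul_exp_neg_mul_Ioi one_half_pos hβ
  rw [Gamma_one_half_eq, show (1 / 2 : ℝ) - 1 = -(1 / 2) by norm_num] at h
  rw [h, ← sqrt_eq_rpow, sqrt_div' _ hβ.le, sqrt_one]
  ring

theorem rpow_neg_three_halves_mul_exp_neg_div_eq_comp_inv {a t : ℝ} (ht : 0 < t) :
    (|(-1 : ℝ)| * t ^ ((-1 : ℝ) - 1)) •
        ((t ^ (-1 : ℝ)) ^ (-(1 / 2) : ℝ) * exp (-(a * t ^ (-1 : ℝ))))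
      = t ^ (-(3 / 2) : ℝ) * exp (-(a / t)) := by
  rw [smul_eq_mul, ← rpow_mul ht.le, rpow_neg_one, ← mul_assoc, abs_neg, abs_one, one_mul,
    ← rpow_add ht, ← div_eq_mul_inv]
  norm_num

theorem integrableOn_rpow_neg_three_halves_mul_exp_neg_div {a : ℝ} (ha : 0 < a) :
    IntegrableOn (fun t : ℝ ↦ t ^ (-(3 / 2) : ℝ) * exp (-(a / t))) (Ioi 0) :=
  ((integrableOn_Ioi_comp_rpow_iff _ (by norm_num)).mpr
    (integrableOn_rpow_neg_half_mul_exp_neg_mul ha)).congr_fun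
    (fun _ ht ↦ rpow_neg_three_halves_mul_exp_neg_div_eq_comp_inv ht) measurableSet_Ioi

theorem integral_rpow_neg_three_halves_mul_exp_neg_div {a : ℝ} (ha : 0 < a) :
    ∫ t in Ioi (0 : ℝ), t ^ (-(3 / 2) : ℝ) * exp (-(a / t)) = √π / √a := by
  rw [← integral_rpow_neg_half_mul_exp_neg_mul ha,
    ← integral_comp_rpow_Ioi (fun t : ℝ ↦ t ^ (-(1 / 2) : ℝ) * exp (-(a * t)))
      (by norm_num : (-1 : ℝ) ≠ 0)]
  exact setIntegral_congr_fun measurableSet_Ioi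
    (fun _ ht ↦ (rpow_neg_three_halves_mul_exp_neg_div_eq_comp_inv ht).symm)

noncomputable def heatMajorant (b P s t : ℝ) : ℝ :=
  2 * b * (t ^ (-(1 / 2) : ℝ) * exp (-(P / 2 * t))) + t ^ (-(3 / 2) : ℝ) * exp (-(s / 16 / t))

theorem integrableOn_heatMajorant {b P s : ℝ} (hP : 0 < P) (hs : 0 < s) :
    IntegrableOn (heatMajorant b P s) (Ioi 0) :=
  ((integrableOn_rpow_neg_half_mul_exp_neg_mul (half_pos hP)).const_mul (2 * b)).add
    (integrableOn_rpow_neg_three_halves_mul_exp_neg_div (by positivity))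

theorem integral_heatMajorant {b P s : ℝ} (hP : 0 < P) (hs : 0 < s) :
    ∫ t in Ioi (0 : ℝ), heatMajorant b P s t = 2 * b * (√π / √(P / 2)) + √π / √(s / 16) := by
  have hs16 : 0 < s / 16 := by positivity
  unfold heatMajorant
  rw [integral_add, integral_const_mul,
    integral_rpow_neg_half_mul_exp_neg_mul (half_pos hP),
    integral_rpow_neg_three_halves_mul_exp_neg_div hs16]
  · exact (integrableOn_rpow_neg_half_mul_exp_neg_mul (half_pos hP)).const_mul _
  · exact integrableOn_rpow_neg_three_halves_mul_exp_neg_div hs16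

theorem sqrt_add_le_one_add_add_sqrt {x y : ℝ} (hx : 0 ≤ x) (hy : 0 ≤ y) :
    √(x + y) ≤ 1 + x + √y := by
  refine sqrt_le_iff.mpr ⟨by positivity, ?_⟩
  nlinarith [sq_sqrt hy, sqrt_nonneg y]

theorem mehler_exponent_le {b P t r2 zz : ℝ} (hb : 0 < b) (hP : 0 ≤ P) (ht : 0 < t)
    (hr2 : 0 ≤ r2) (hzz : 0 ≤ zz) :
    -(t * P) - b * cosh (b * t) / sinh (b * t) / 4 * r2 - zz / (4 * t)
      ≤ 1 / 8 - √(b * r2 + P * zz) / 8 - P / 2 * t - (r2 + zz) / 16 / t := by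
  have hcoth : b / 8 * r2 + r2 / (8 * t) ≤ b * cosh (b * t) / sinh (b * t) / 4 * r2 := by
    have h := one_add_inv_le_two_mul_cosh_div_sinh (mul_pos hb ht)
    have e : b * cosh (b * t) / sinh (b * t) / 4 * r2
        = b * r2 / 8 * (2 * (cosh (b * t) / sinh (b * t))) := by ring
    have e' : b / 8 * r2 + r2 / (8 * t) = b * r2 / 8 * (1 + (b * t)⁻¹) := by
      field_simp
    rw [e, e']
    gcongr
  have hamgm := sqrt_mul_le_mul_add_div hP hzz ht
  have hsplit := sqrt_add_le_one_add_add_sqrt (mul_nonneg hb.le hr2) (mul_nonneg hP hzz)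
  have e1 : r2 / (8 * t) = r2 / t / 8 := by ring
  have e2 : zz / (4 * t) = zz / t / 4 := by ring
  have e3 : (r2 + zz) / 16 / t = r2 / t / 16 + zz / t / 16 := by ring
  have hA : 0 ≤ r2 / t := by positivity
  have hZ : 0 ≤ zz / t := by positivity
  have hPt : 0 ≤ P * t := by positivity
  linarith

theorem norm_mehlerKernel {b t : ℝ} (hb : 0 < b) (ht : 0 < t) (ξ ζ : ℝ × ℝ) :
    ‖mehlerKernel b t ξ ζ‖ = b / (4 * π * sinh (b * t)) *
      exp (-(b * cosh (b * t) / sinh (b * t) / 4 * ((ξ.1 - ζ.1) ^ 2 + (ξ.2 - ζ.2) ^ 2))) := by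
  have hs : 0 < sinh (b * t) := sinh_pos_iff.mpr (mul_pos hb ht)
  rw [mehlerKernel, norm_mul, Complex.norm_real, Complex.norm_exp, norm_of_nonneg (by positivity)]
  simp only [Complex.sub_re, Complex.mul_re, Complex.neg_re, Complex.neg_im, Complex.ofReal_re,
    Complex.ofReal_im, Complex.I_re, Complex.I_im]
  ring_nf

theorem mehler_integrand_le_heatMajorant {b P t r2 zz σ : ℝ} (hb : 0 < b) (hP : 0 ≤ P) (ht : 0 < t)
    (hr2 : 0 ≤ r2) (hzz : 0 ≤ zz) (hσ : σ = 1 ∨ σ = -1) :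
    exp (-(t * (P + σ * b))) * (b / (4 * π * sinh (b * t)) *
        exp (-(b * cosh (b * t) / sinh (b * t) / 4 * r2))) * (1 / √(4 * π * t)) *
        exp (-(zz / (4 * t)))
      ≤ exp (1 / 8 - √(b * r2 + P * zz) / 8) / (4 * π * √(4 * π)) *
        heatMajorant b P (r2 + zz) t := by
  have hs : 0 < sinh (b * t) := sinh_pos_iff.mpr (mul_pos hb ht)
  have hsqrt : 1 / √(4 * π * t) = t ^ (-(1 / 2) : ℝ) / √(4 * π) := by
    rw [sqrt_mul (by positivity), rpow_neg ht.le, ← sqrt_eq_rpow]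
    field_simp
  have h32 : t ^ (-(3 / 2) : ℝ) = t⁻¹ * t ^ (-(1 / 2) : ℝ) := by
    rw [← rpow_neg_one, ← rpow_add ht]; norm_num
  set Q := √(b * r2 + P * zz)
  set c := b * cosh (b * t) / sinh (b * t) / 4
  calc exp (-(t * (P + σ * b))) * (b / (4 * π * sinh (b * t)) * exp (-(c * r2)))
        * (1 / √(4 * π * t)) * exp (-(zz / (4 * t)))
      = exp (-(σ * (b * t))) / sinh (b * t) * b * exp (-(t * P) - c * r2 - zz / (4 * t))
          * t ^ (-(1 / 2) : ℝ) / (4 * π * √(4 * π)) := by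
        rw [hsqrt, sub_eq_add_neg, sub_eq_add_neg, exp_add, exp_add,
          show -(t * (P + σ * b)) = -(σ * (b * t)) + -(t * P) by ring, exp_add]
        field_simp
    _ ≤ (2 + (b * t)⁻¹) * b * exp (1 / 8 - Q / 8 - P / 2 * t - (r2 + zz) / 16 / t)
          * t ^ (-(1 / 2) : ℝ) / (4 * π * √(4 * π)) := by
        gcongr ?_ * _ * exp ?_ * _ / _
        · exact exp_neg_mul_div_sinh_le hσ (mul_pos hb ht)
        · exact mehler_exponent_le hb hP ht hr2 hzz
    _ = exp (1 / 8 - Q / 8) / (4 * π * √(4 * π)) *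
          (2 * b * (t ^ (-(1 / 2) : ℝ) * exp (-(P / 2 * t)) * exp (-((r2 + zz) / 16 / t)))
            + t ^ (-(3 / 2) : ℝ) * exp (-(P / 2 * t)) * exp (-((r2 + zz) / 16 / t))) := by
        rw [h32, sub_eq_add_neg _ ((r2 + zz) / 16 / t), sub_eq_add_neg _ (P / 2 * t), exp_add,
          exp_add]
        field_simp
    _ ≤ exp (1 / 8 - Q / 8) / (4 * π * √(4 * π)) *
          (2 * b * (t ^ (-(1 / 2) : ℝ) * exp (-(P / 2 * t)) * 1)
            + t ^ (-(3 / 2) : ℝ) * 1 * exp (-((r2 + zz) / 16 / t))) := by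
        gcongr <;> exact exp_le_one_iff.mpr (by rw [neg_nonpos]; positivity)
    _ = _ := by rw [heatMajorant]; ring

noncomputable def resolventIntegrand (b P sgn : ℝ) (ξ ζ : Fin 3 → ℝ) (t : ℝ) : ℂ :=
  ((Real.exp (-(t * (P + sgn * b))) : ℝ) : ℂ) *
    mehlerKernel b t (ξ 0, ξ 1) (ζ 0, ζ 1) *
    ((1 / Real.sqrt (4 * π * t) : ℝ) : ℂ) *
    Complex.exp (-(((ξ 2 - ζ 2) ^ 2 / (4 * t) : ℝ) : ℂ))

theorem diracResolventEntry_eq (b P sgn : ℝ) (ξ ζ : Fin 3 → ℝ) :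
    diracResolventEntry b P sgn ξ ζ = ∫ t in Ioi (0 : ℝ), resolventIntegrand b P sgn ξ ζ t :=
  rfl

theorem norm_resolventIntegrand {b P sgn t : ℝ} (hb : 0 < b) (ht : 0 < t) (ξ ζ : Fin 3 → ℝ) :
    ‖resolventIntegrand b P sgn ξ ζ t‖ = exp (-(t * (P + sgn * b))) *
      (b / (4 * π * sinh (b * t)) * exp (-(b * cosh (b * t) / sinh (b * t) / 4 *
        ((ξ 0 - ζ 0) ^ 2 + (ξ 1 - ζ 1) ^ 2)))) *
      (1 / √(4 * π * t)) * exp (-((ξ 2 - ζ 2) ^ 2 / (4 * t))) := by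
  rw [resolventIntegrand, norm_mul, norm_mul, norm_mul, norm_mehlerKernel hb ht,
    Complex.norm_real, Complex.norm_real, Complex.norm_exp, ← Complex.ofReal_neg,
    Complex.ofReal_re, norm_of_nonneg (exp_pos _).le, norm_of_nonneg (by positivity)]

noncomputable def resolventConstant (κ : ℝ) : ℝ :=
  exp (1 / 8) * √π * (32 * √2 + 4 * √(κ * (1 + κ))) / (4 * π * √(4 * π))

theorem resolventConstant_pos (κ : ℝ) : 0 < resolventConstant κ := by
  unfold resolventConstant
  positivity

theorem sqrt_mul_sqrt_anisotropic_le {κ b P r2 zz : ℝ} (hb : 0 < b) (hP : 0 ≤ P) (hPκ : P ≤ κ * b)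
    (hr2 : 0 ≤ r2) (hzz : 0 ≤ zz) :
    √P * √(b * r2 + P * zz) ≤ √(κ * (1 + κ)) * b * √(r2 + zz) := by
  have hκ : 0 ≤ κ := nonneg_of_mul_nonneg_left (hP.trans hPκ) hb
  calc √P * √(b * r2 + P * zz) = √(P * (b * r2 + P * zz)) := (sqrt_mul hP _).symm
    _ ≤ √(κ * (1 + κ) * b ^ 2 * (r2 + zz)) := by
        refine sqrt_le_sqrt ?_
        calc P * (b * r2 + P * zz) ≤ (κ * b) * ((1 + κ) * b * (r2 + zz)) := by
              gcongr
              nlinarith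
          _ = κ * (1 + κ) * b ^ 2 * (r2 + zz) := by ring
    _ = √(κ * (1 + κ)) * b * √(r2 + zz) := by
        rw [sqrt_mul (x := κ * (1 + κ) * b ^ 2) (by positivity),
          sqrt_mul (x := κ * (1 + κ)) (by positivity), sqrt_sq hb.le]

theorem mul_integral_heatMajorant_le {κ b P r2 zz : ℝ} (hb : 0 < b) (hP : 0 < P)
    (hPκ : P ≤ κ * b) (hr2 : 0 ≤ r2) (hzz : 0 ≤ zz) (hs : 0 < r2 + zz) :
    exp (1 / 8 - √(b * r2 + P * zz) / 8) / (4 * π * √(4 * π)) *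
        ∫ t in Ioi (0 : ℝ), heatMajorant b P (r2 + zz) t
      ≤ resolventConstant κ * b / √P * exp (-(1 / 16 * √(b * r2 + P * zz))) /
          √(b * r2 + P * zz) := by
  rw [integral_heatMajorant hP hs]
  set Q := √(b * r2 + P * zz) with hQdef
  set E := exp (-(1 / 16 * Q)) with hEdef
  have hQ : 0 < Q := sqrt_pos.mpr (by
    nlinarith [mul_pos (mul_pos hb hP) hs, mul_nonneg (mul_nonneg hb.le hb.le) hr2,
      mul_nonneg (mul_nonneg hP.le hP.le) hzz, add_pos hb hP])
  have hexp : exp (1 / 8 - Q / 8) = exp (1 / 8) * E * E := by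
    rw [hEdef, ← exp_add, ← exp_add]; ring_nf
  have hE16 : E ≤ 16 / Q := (exp_neg_le_inv (by positivity)).trans_eq (by field_simp)
  have hE1 : E ≤ 1 := exp_le_one_iff.mpr (by rw [neg_nonpos]; positivity)
  have hP2 : √π / √(P / 2) = √2 * √π / √P := by
    rw [sqrt_div' _ zero_le_two]; field_simp
  have hs16 : √π / √((r2 + zz) / 16) = 4 * √π / √(r2 + zz) := by
    rw [sqrt_div' _ (by norm_num : (0 : ℝ) ≤ 16), show (16 : ℝ) = 4 ^ 2 by norm_num,
      sqrt_sq zero_le_four]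
    field_simp
  have hgeom : E / √(r2 + zz) ≤ √(κ * (1 + κ)) * b / (√P * Q) := by
    rw [div_le_div_iff₀ (sqrt_pos.mpr hs) (by positivity)]
    calc E * (√P * Q) ≤ 1 * (√(κ * (1 + κ)) * b * √(r2 + zz)) :=
          mul_le_mul hE1 (sqrt_mul_sqrt_anisotropic_le hb hP.le hPκ hr2 hzz) (by positivity)
            zero_le_one
      _ = _ := by ring
  calc exp (1 / 8 - Q / 8) / (4 * π * √(4 * π)) *
        (2 * b * (√π / √(P / 2)) + √π / √((r2 + zz) / 16))
      = exp (1 / 8) * √π / (4 * π * √(4 * π)) * E *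
          (2 * √2 * (b / √P) * E + 4 * (E / √(r2 + zz))) := by
        rw [hexp, hP2, hs16]; ring
    _ ≤ exp (1 / 8) * √π / (4 * π * √(4 * π)) * E *
          (2 * √2 * (b / √P) * (16 / Q) + 4 * (√(κ * (1 + κ)) * b / (√P * Q))) := by
        gcongr
    _ = resolventConstant κ * b / √P * E / Q := by
        rw [resolventConstant]; ring

theorem sum_sq_sub_pos_of_ne {ξ ζ : Fin 3 → ℝ} (hne : ξ ≠ ζ) :
    0 < (ξ 0 - ζ 0) ^ 2 + (ξ 1 - ζ 1) ^ 2 + (ξ 2 - ζ 2) ^ 2 := by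
  contrapose! hne
  funext i
  fin_cases i <;> simp only [Fin.zero_eta, Fin.mk_one, Fin.reduceFinMk, Fin.isValue] <;>
    nlinarith [sq_nonneg (ξ 0 - ζ 0), sq_nonneg (ξ 1 - ζ 1), sq_nonneg (ξ 2 - ζ 2)]

theorem stmt17_general (κ : ℝ) :
    ∃ C c : ℝ, 0 < C ∧ 0 < c ∧
      ∀ (b P : ℝ) (ξ ζ : Fin 3 → ℝ) (sgn : ℝ),
        1 ≤ b → 1 ≤ P → P ≤ κ * b → (sgn = 1 ∨ sgn = -1) → ξ ≠ ζ →
        ‖diracResolventEntry b P sgn ξ ζ‖ ≤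
          C * b / Real.sqrt P *
            Real.exp (-(c * Real.sqrt (b * ((ξ 0 - ζ 0) ^ 2 + (ξ 1 - ζ 1) ^ 2)
                + P * (ξ 2 - ζ 2) ^ 2))) /
            Real.sqrt (b * ((ξ 0 - ζ 0) ^ 2 + (ξ 1 - ζ 1) ^ 2)
                + P * (ξ 2 - ζ 2) ^ 2) := by
  refine ⟨resolventConstant κ, 1 / 16, resolventConstant_pos κ, by norm_num, ?_⟩
  intro b P ξ ζ sgn hb hP hPκ hsgn hne
  have hb0 : 0 < b := one_pos.trans_le hb
  have hP0 : 0 < P := one_pos.trans_le hP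
  have hs := sum_sq_sub_pos_of_ne hne
  calc ‖diracResolventEntry b P sgn ξ ζ‖
      ≤ ∫ t in Ioi (0 : ℝ), exp (1 / 8 - √(b * ((ξ 0 - ζ 0) ^ 2 + (ξ 1 - ζ 1) ^ 2)
            + P * (ξ 2 - ζ 2) ^ 2) / 8) / (4 * π * √(4 * π)) *
          heatMajorant b P ((ξ 0 - ζ 0) ^ 2 + (ξ 1 - ζ 1) ^ 2 + (ξ 2 - ζ 2) ^ 2) t := by
        rw [diracResolventEntry_eq]
        refine norm_integral_le_of_norm_le ((integrableOn_heatMajorant hP0 hs).const_mul _)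
          (ae_restrict_of_forall_mem measurableSet_Ioi fun t ht ↦ ?_)
        exact (norm_resolventIntegrand hb0 ht ξ ζ).trans_le
          (mehler_integrand_le_heatMajorant hb0 hP0.le ht (by positivity) (by positivity) hsgn)
    _ = _ := integral_const_mul _ _
    _ ≤ _ := mul_integral_heatMajorant_le hb0 hP0 hPκ (by positivity) (by positivity) hs

/-- For the free Dirac operator with constant field of strength
`b ≥ 1` in the linear gauge, and `1 ≤ P ≤ κ b`, the matrix (entrywise) norm of the
resolvent kernel satisfies
`‖(D̃² + P)⁻¹(ξ,ζ)‖ ≤ C b P^{-1/2} e^{−c|||ξ−ζ|||}/|||ξ−ζ|||`, where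
`|||ξ||| = (b ξ⊥² + P ξ₃²)^{1/2}` and `C, c` are universal constants. -/
theorem stmt17 (κ : ℝ) (hκ : 0 < κ) :
    ∃ C c : ℝ, 0 < C ∧ 0 < c ∧
      ∀ (b P : ℝ) (ξ ζ : Fin 3 → ℝ) (sgn : ℝ),
        1 ≤ b → 1 ≤ P → P ≤ κ * b → (sgn = 1 ∨ sgn = -1) → ξ ≠ ζ →
        ‖diracResolventEntry b P sgn ξ ζ‖ ≤
          C * b / Real.sqrt P *
            Real.exp (-(c * Real.sqrt (b * ((ξ 0 - ζ 0) ^ 2 + (ξ 1 - ζ 1) ^ 2)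
                + P * (ξ 2 - ζ 2) ^ 2))) /
            Real.sqrt (b * ((ξ 0 - ζ 0) ^ 2 + (ξ 1 - ζ 1) ^ 2)
                + P * (ξ 2 - ζ 2) ^ 2) :=
  stmt17_general κ
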